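/- arXiv:2306.07844 — 7 statements merged into one kernel-verified Lean document; each statement's English description precedes it below -/
import Mathlib

section
/- Let P ⊆ ℕ be ω-closed with 0 ∈ P and with at least two elements, and let ε be an injective endomorphism of the semigroup B_ω^𝓕 (𝓕 = {[p) : p ∈ P}). Then ε is the identity map if and only if there exists an element (i,j,p) ∈ B_ω^𝓕 with (i,j,p) ∉ {(0,0,0), (0,0,1)} such that ε(i,j,p) = (i,j,p). (Theorem 2.4) -/
/-- A set `P ⊆ ℕ` of left endpoints encodes an ω-closed family
`𝓕 = {[p) : p ∈ P}` of nonempty inductive subsets of ω iff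
`max p₁ (p₂ ∸ n) ∈ P` for all `p₁, p₂ ∈ P` and `n ∈ ℕ`. -/
def OmegaClosed (P : Set ℕ) : Prop :=
  ∀ p₁ ∈ P, ∀ p₂ ∈ P, ∀ n : ℕ, max p₁ (p₂ - n) ∈ P

/-- The multiplication of the semigroup `B_ω^𝓕` on triples `(i, j, p)`:
`(i₁,j₁,p₁)·(i₂,j₂,p₂) = (i₁ + (i₂ ∸ j₁), j₂ + (j₁ ∸ i₂), max (p₁ ∸ (i₂ ∸ j₁)) (p₂ ∸ (j₁ ∸ i₂)))`
(the third coordinate records `(j₁ - i₂ + [p₁)) ∩ [p₂)` etc.). -/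
def bmul (x y : ℕ × ℕ × ℕ) : ℕ × ℕ × ℕ :=
  (x.1 + (y.1 - x.2.1), y.2.1 + (x.2.1 - y.1),
    max (x.2.2 - (y.1 - x.2.1)) (y.2.2 - (x.2.1 - y.1)))

/-- The carrier of `B_ω^𝓕`: triples whose third coordinate lies in `P`. -/
def BF (P : Set ℕ) : Set (ℕ × ℕ × ℕ) := {x | x.2.2 ∈ P}

/-- `ε` is an endomorphism of the semigroup `B_ω^𝓕`. -/
def IsEndo (P : Set ℕ) (ε : ℕ × ℕ × ℕ → ℕ × ℕ × ℕ) : Prop :=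
  (∀ x ∈ BF P, ε x ∈ BF P) ∧
    ∀ x ∈ BF P, ∀ y ∈ BF P, ε (bmul x y) = bmul (ε x) (ε y)

/-!
In `B_ω^𝓕` the identity is `1 = (0,0,0)`, the elements `a = (1,0,0)` and `b = (0,1,0)` satisfy
`b·a = 1`, and `(i,j,p) = aⁱ·(0,0,p)·bʲ`.

If `ε` fixes some `f`, it maps the finite set `{x | x·f = f = f·x}` injectively, hence bijectively,
to itself; so `ε w = 1` for some `w` there, and `ε 1 = ε w · ε 1 = ε (w·1) = 1`. Applying `ε` to
`b·a = 1` gives `ε a = aᵐ`, `ε b = bᵐ` with `m ≥ 1`. A fixed `(i,j,p)` with `i ≥ 1` is absorbed by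
the idempotent `(i,i,0)`, whose image `(mi,mi,0)` must then satisfy `mi ≤ i` (symmetrically if
`j ≥ 1`); a fixed `(0,0,p)` with `p ≥ 2` gives `ε (0,0,1) = ε (bᵖ⁻¹·(0,0,p)·aᵖ⁻¹) = (0,0,p-(p-1)m)`,
which is `1` unless `m = 1`. Once `ε` fixes `a` and `b`, the idempotent `ε (0,0,p+1)` satisfies
`b · ε (0,0,p+1) · a = (0,0,p)`, so it is `1`, `(1,1,p)` or `(0,0,p+1)`, and injectivity leaves
the last.
-/

@[simp] lemma bmul_mk (i₁ j₁ p₁ i₂ j₂ p₂ : ℕ) :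
    bmul (i₁, j₁, p₁) (i₂, j₂, p₂) =
      (i₁ + (i₂ - j₁), j₂ + (j₁ - i₂), max (p₁ - (i₂ - j₁)) (p₂ - (j₁ - i₂))) := rfl

@[simp] lemma bmul_zero_left (x : ℕ × ℕ × ℕ) : bmul (0, 0, 0) x = x := by
  obtain ⟨_, _, _⟩ := x
  simp

@[simp] lemma bmul_zero_right (x : ℕ × ℕ × ℕ) : bmul x (0, 0, 0) = x := by
  obtain ⟨_, _, _⟩ := x
  simp

lemma mk_eq_bmul (i j p : ℕ) :
    ((i, j, p) : ℕ × ℕ × ℕ) = bmul (bmul (i, 0, 0) (0, 0, p)) (0, j, 0) := by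
  simp

@[simp] lemma mk_mem_BF {P : Set ℕ} {i j p : ℕ} : ((i, j, p) : ℕ × ℕ × ℕ) ∈ BF P ↔ p ∈ P :=
  Iff.rfl

lemma OmegaClosed.mem_of_le {P : Set ℕ} (hP : OmegaClosed P) (h0 : 0 ∈ P) {p q : ℕ}
    (hp : p ∈ P) (hqp : q ≤ p) : q ∈ P := by
  simpa [Nat.sub_sub_self hqp] using hP 0 h0 p hp (p - q)

lemma finite_setOf_bmul_eq (f : ℕ × ℕ × ℕ) :
    {x : ℕ × ℕ × ℕ | bmul x f = f ∧ bmul f x = f}.Finite := by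
  obtain ⟨i, j, p⟩ := f
  refine ((Set.finite_Iic i).prod ((Set.finite_Iic i).prod (Set.finite_Iic (p + i)))).subset ?_
  rintro ⟨x₁, x₂, x₃⟩ ⟨hxf, -⟩
  simp only [bmul_mk, Prod.mk.injEq] at hxf
  simp only [Set.mem_prod, Set.mem_Iic]
  omega

lemma idempotent_eq_of_conj_eq {x : ℕ × ℕ × ℕ} {n : ℕ} (hidem : bmul x x = x)
    (hconj : bmul (bmul (0, 1, 0) x) (1, 0, 0) = (0, 0, n)) :
    x = (1, 1, n) ∨ x = (0, 0, 0) ∨ x = (0, 0, n + 1) := by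
  obtain ⟨d₁, d₂, r⟩ := x
  simp only [bmul_mk, Prod.mk.injEq] at hidem hconj ⊢
  omega

namespace IsEndo

variable {P : Set ℕ} {ε : ℕ × ℕ × ℕ → ℕ × ℕ × ℕ}

lemma map_zero_of_map_eq_self (hend : IsEndo P ε) (hinj : Set.InjOn ε (BF P)) (h0 : 0 ∈ P)
    {f : ℕ × ℕ × ℕ} (hfP : f ∈ BF P) (hf : ε f = f) : ε (0, 0, 0) = (0, 0, 0) := by
  set T := {x ∈ BF P | bmul x f = f ∧ bmul f x = f}
  have hTfin : T.Finite := (finite_setOf_bmul_eq f).subset fun x hx => hx.2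
  have hmaps : Set.MapsTo ε T T := by
    rintro x ⟨hx, hxf, hfx⟩
    refine ⟨hend.1 x hx, ?_, ?_⟩
    · rw [← hf, ← hend.2 x hx f hfP, hxf]
    · rw [← hf, ← hend.2 f hfP x hx, hfx]
  have hsurj : Set.SurjOn ε T T :=
    ((hTfin.injOn_iff_bijOn_of_mapsTo hmaps).1 (hinj.mono fun x hx => hx.1)).surjOn
  obtain ⟨w, hw, hwe⟩ := hsurj (show ((0, 0, 0) : ℕ × ℕ × ℕ) ∈ T from ⟨h0, by simp, by simp⟩)
  simpa [hwe] using (hend.2 w hw.1 (0, 0, 0) h0).symm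

lemma exists_map_generators (hend : IsEndo P ε) (hinj : Set.InjOn ε (BF P)) (h0 : 0 ∈ P)
    (he : ε (0, 0, 0) = (0, 0, 0)) :
    ∃ m, 1 ≤ m ∧ ε (1, 0, 0) = (m, 0, 0) ∧ ε (0, 1, 0) = (0, m, 0) := by
  rcases ha : ε (1, 0, 0) with ⟨w₁, w₂, w₃⟩
  rcases hb : ε (0, 1, 0) with ⟨u₁, u₂, u₃⟩
  have hba := hend.2 (0, 1, 0) h0 (1, 0, 0) h0
  rw [show bmul (0, 1, 0) (1, 0, 0) = (0, 0, 0) by simp, he, ha, hb] at hba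
  simp only [bmul_mk, Prod.mk.injEq] at hba
  obtain ⟨rfl, rfl, rfl, rfl, rfl⟩ : u₁ = 0 ∧ u₃ = 0 ∧ w₂ = 0 ∧ w₃ = 0 ∧ w₁ = u₂ := by omega
  refine ⟨w₁, Nat.pos_of_ne_zero fun hm₀ => ?_, rfl, rfl⟩
  have := hinj (x₁ := (0, 1, 0)) (x₂ := (0, 0, 0)) h0 h0 (by rw [hb, he, hm₀])
  simp at this

lemma map_mk_zero_zero (hend : IsEndo P ε) (h0 : 0 ∈ P) (he : ε (0, 0, 0) = (0, 0, 0)) {m : ℕ}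
    (ha : ε (1, 0, 0) = (m, 0, 0)) (k : ℕ) : ε (k, 0, 0) = (k * m, 0, 0) := by
  induction k with
  | zero => simpa using he
  | succ k ih =>
    calc ε (k + 1, 0, 0) = ε (bmul (1, 0, 0) (k, 0, 0)) := by simp [add_comm]
      _ = ((k + 1) * m, 0, 0) := by rw [hend.2 _ h0 _ h0, ha, ih]; simp [add_one_mul, add_comm]

lemma map_zero_mk_zero (hend : IsEndo P ε) (h0 : 0 ∈ P) (he : ε (0, 0, 0) = (0, 0, 0)) {m : ℕ}
    (hb : ε (0, 1, 0) = (0, m, 0)) (k : ℕ) : ε (0, k, 0) = (0, k * m, 0) := by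
  induction k with
  | zero => simpa using he
  | succ k ih =>
    calc ε (0, k + 1, 0) = ε (bmul (0, k, 0) (0, 1, 0)) := by simp [add_comm]
      _ = (0, (k + 1) * m, 0) := by rw [hend.2 _ h0 _ h0, hb, ih]; simp [add_one_mul, add_comm]

lemma map_mk_mk_zero (hend : IsEndo P ε) (h0 : 0 ∈ P) (he : ε (0, 0, 0) = (0, 0, 0)) {m : ℕ}
    (ha : ε (1, 0, 0) = (m, 0, 0)) (hb : ε (0, 1, 0) = (0, m, 0)) (i j : ℕ) :
    ε (i, j, 0) = (i * m, j * m, 0) := by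
  calc ε (i, j, 0) = ε (bmul (i, 0, 0) (0, j, 0)) := by simp
    _ = (i * m, j * m, 0) := by
      rw [hend.2 _ h0 _ h0, hend.map_mk_zero_zero h0 he ha, hend.map_zero_mk_zero h0 he hb]
      simp

lemma eq_one_of_map_eq_self_of_pos_fst (hend : IsEndo P ε) (h0 : 0 ∈ P)
    (he : ε (0, 0, 0) = (0, 0, 0)) {m : ℕ} (hm : 1 ≤ m) (ha : ε (1, 0, 0) = (m, 0, 0))
    (hb : ε (0, 1, 0) = (0, m, 0)) {i j p : ℕ} (hp : p ∈ P) (hx : ε (i, j, p) = (i, j, p))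
    (hi : 0 < i) : m = 1 := by
  have h := hend.2 (i, i, 0) h0 (i, j, p) hp
  rw [show bmul (i, i, 0) (i, j, p) = (i, j, p) by simp, hx,
    hend.map_mk_mk_zero h0 he ha hb] at h
  simp only [bmul_mk, Prod.mk.injEq] at h
  have : i * m ≤ i * 1 := by omega
  exact le_antisymm (Nat.le_of_mul_le_mul_left this hi) hm

lemma eq_one_of_map_eq_self_of_pos_snd (hend : IsEndo P ε) (h0 : 0 ∈ P)
    (he : ε (0, 0, 0) = (0, 0, 0)) {m : ℕ} (hm : 1 ≤ m) (ha : ε (1, 0, 0) = (m, 0, 0))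
    (hb : ε (0, 1, 0) = (0, m, 0)) {i j p : ℕ} (hp : p ∈ P) (hx : ε (i, j, p) = (i, j, p))
    (hj : 0 < j) : m = 1 := by
  have h := hend.2 (i, j, p) hp (j, j, 0) h0
  rw [show bmul (i, j, p) (j, j, 0) = (i, j, p) by simp, hx,
    hend.map_mk_mk_zero h0 he ha hb] at h
  simp only [bmul_mk, Prod.mk.injEq] at h
  have : j * m ≤ j * 1 := by omega
  exact le_antisymm (Nat.le_of_mul_le_mul_left this hj) hm

lemma eq_one_of_map_eq_self_of_two_le (hend : IsEndo P ε) (hinj : Set.InjOn ε (BF P))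
    (hP : OmegaClosed P) (h0 : 0 ∈ P) (he : ε (0, 0, 0) = (0, 0, 0)) {m : ℕ} (hm : 1 ≤ m)
    (ha : ε (1, 0, 0) = (m, 0, 0)) (hb : ε (0, 1, 0) = (0, m, 0)) {p : ℕ} (hp : p ∈ P)
    (hx : ε (0, 0, p) = (0, 0, p)) (hp2 : 2 ≤ p) : m = 1 := by
  by_contra hm1
  have h1P : 1 ∈ P := hP.mem_of_le h0 hp (by omega)
  have hpm : p ≤ (p - 1) * m :=
    calc p ≤ (p - 1) * 2 := by omega
      _ ≤ (p - 1) * m := Nat.mul_le_mul_left _ (by omega)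
  have h1 : ε (0, 0, 1) = ε (0, 0, 0) :=
    calc ε (0, 0, 1) = ε (bmul (bmul (0, p - 1, 0) (0, 0, p)) (p - 1, 0, 0)) :=
          congrArg ε (by simp only [bmul_mk, Prod.mk.injEq]; omega)
      _ = bmul (bmul (0, (p - 1) * m, 0) (0, 0, p)) ((p - 1) * m, 0, 0) := by
          rw [hend.2 _ (by simpa [show p - (p - 1) = 1 by omega] using h1P) _ h0,
            hend.2 _ h0 _ hp, hend.map_zero_mk_zero h0 he hb, hx, hend.map_mk_zero_zero h0 he ha]
      _ = ε (0, 0, 0) := by rw [he]; simp only [bmul_mk, Prod.mk.injEq]; omega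
  have := hinj (x₁ := (0, 0, 1)) h1P h0 h1
  simp at this

lemma map_zero_zero_mk (hend : IsEndo P ε) (hinj : Set.InjOn ε (BF P)) (hP : OmegaClosed P)
    (h0 : 0 ∈ P) (he : ε (0, 0, 0) = (0, 0, 0)) (ha : ε (1, 0, 0) = (1, 0, 0))
    (hb : ε (0, 1, 0) = (0, 1, 0)) {p : ℕ} (hp : p ∈ P) : ε (0, 0, p) = (0, 0, p) := by
  induction p with
  | zero => exact he
  | succ n ih =>
    have hn : n ∈ P := hP.mem_of_le h0 hp n.le_succ
    have h11 : ε (1, 1, n) = (1, 1, n) :=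
      calc ε (1, 1, n) = ε (bmul (bmul (1, 0, 0) (0, 0, n)) (0, 1, 0)) := by simp
        _ = (1, 1, n) := by
          rw [hend.2 _ (by simpa using hn) _ h0, hend.2 _ h0 _ hn, ha, hb, ih hn]; simp
    have hidem : bmul (ε (0, 0, n + 1)) (ε (0, 0, n + 1)) = ε (0, 0, n + 1) := by
      rw [← hend.2 _ hp _ hp]; simp
    have hconj : bmul (bmul (0, 1, 0) (ε (0, 0, n + 1))) (1, 0, 0) = (0, 0, n) := by
      rw [← ha, ← hb, ← hend.2 _ h0 _ hp, ← hend.2 _ (by simpa using hn) _ h0, ← ih hn]; simp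
    rcases idempotent_eq_of_conj_eq hidem hconj with h | h | h
    · have := hinj (x₂ := (1, 1, n)) hp hn (h.trans h11.symm)
      simp at this
    · have := hinj (x₂ := (0, 0, 0)) hp h0 (h.trans he.symm)
      simp at this
    · exact h

lemma eq_self_of_map_generators (hend : IsEndo P ε) (h0 : 0 ∈ P)
    (he : ε (0, 0, 0) = (0, 0, 0)) (ha : ε (1, 0, 0) = (1, 0, 0)) (hb : ε (0, 1, 0) = (0, 1, 0))
    (hdiag : ∀ p ∈ P, ε (0, 0, p) = (0, 0, p)) : ∀ x ∈ BF P, ε x = x := by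
  rintro ⟨i, j, p⟩ (hp : p ∈ P)
  calc ε (i, j, p) = ε (bmul (bmul (i, 0, 0) (0, 0, p)) (0, j, 0)) := by rw [← mk_eq_bmul]
    _ = (i, j, p) := by
      rw [hend.2 _ (by simpa using hp) _ h0, hend.2 _ h0 _ hp, hdiag p hp,
        hend.map_mk_zero_zero h0 he ha, hend.map_zero_mk_zero h0 he hb]
      simp

end IsEndo

theorem identity_iff_fixed_point_general (P : Set ℕ) (hP : OmegaClosed P) (h0 : 0 ∈ P)
    (ε : ℕ × ℕ × ℕ → ℕ × ℕ × ℕ)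
    (hend : IsEndo P ε) (hinj : Set.InjOn ε (BF P)) :
    (∀ x ∈ BF P, ε x = x) ↔
      ∃ i j p : ℕ, p ∈ P ∧ ((i, j, p) : ℕ × ℕ × ℕ) ≠ (0, 0, 0) ∧
        ((i, j, p) : ℕ × ℕ × ℕ) ≠ (0, 0, 1) ∧ ε (i, j, p) = (i, j, p) := by
  refine ⟨fun h => ⟨1, 0, 0, h0, by simp, by simp, h (1, 0, 0) h0⟩, ?_⟩
  rintro ⟨i, j, p, hp, h₀, h₁, hx⟩
  have he := hend.map_zero_of_map_eq_self hinj h0 hp hx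
  obtain ⟨m, hm, ha, hb⟩ := hend.exists_map_generators hinj h0 he
  obtain rfl : m = 1 := by
    rcases Nat.eq_zero_or_pos i with rfl | hi
    · rcases Nat.eq_zero_or_pos j with rfl | hj
      · have hp2 : 2 ≤ p := by simp at h₀ h₁; omega
        exact hend.eq_one_of_map_eq_self_of_two_le hinj hP h0 he hm ha hb hp hx hp2
      · exact hend.eq_one_of_map_eq_self_of_pos_snd h0 he hm ha hb hp hx hj
    · exact hend.eq_one_of_map_eq_self_of_pos_fst h0 he hm ha hb hp hx hi
  exact hend.eq_self_of_map_generators h0 he ha hb fun p hp =>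
    hend.map_zero_zero_mk hinj hP h0 he ha hb hp

/-- **Theorem 2.4.** Let `P ⊆ ℕ` be ω-closed with `0 ∈ P` and at least two elements,
and let `ε` be an injective endomorphism of `B_ω^𝓕`.  Then `ε` is the identity map iff
there is an element `(i,j,p) ∈ B_ω^𝓕 \ {(0,0,0), (0,0,1)}` with `ε (i,j,p) = (i,j,p)`. -/
theorem identity_iff_fixed_point (P : Set ℕ) (hP : OmegaClosed P) (h0 : 0 ∈ P)
    (hP2 : P.Nontrivial) (ε : ℕ × ℕ × ℕ → ℕ × ℕ × ℕ)
    (hend : IsEndo P ε) (hinj : Set.InjOn ε (BF P)) :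
    (∀ x ∈ BF P, ε x = x) ↔
      ∃ i j p : ℕ, p ∈ P ∧ ((i, j, p) : ℕ × ℕ × ℕ) ≠ (0, 0, 0) ∧
        ((i, j, p) : ℕ × ℕ × ℕ) ≠ (0, 0, 1) ∧ ε (i, j, p) = (i, j, p) :=
  identity_iff_fixed_point_general P hP h0 ε hend hinj
end

section
/- Let P ⊆ ℕ be ω-closed with 0 ∈ P and with at least two elements. If ε is an injective endomorphism of the semigroup B_ω^𝓕 (𝓕 = {[p) : p ∈ P}) such that ε(1,1,0) = (1,1,0), then ε is the identity map. (Lemma 2.1) -/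
lemma bmul_bmul_eq_mk (i j p : ℕ) : bmul (i, 0, 0) (bmul (0, 0, p) (0, j, 0)) = (i, j, p) := by
  simp

lemma OmegaClosed.sub_mem {P : Set ℕ} (hP : OmegaClosed P) (h0 : 0 ∈ P) {p : ℕ} (hp : p ∈ P)
    (n : ℕ) : p - n ∈ P := by
  simpa using hP 0 h0 p hp n

namespace IsEndo

variable {P : Set ℕ} {ε : ℕ × ℕ × ℕ → ℕ × ℕ × ℕ}

lemma map_eq_bmul (hend : IsEndo P ε) {x y z : ℕ × ℕ × ℕ} (hx : x ∈ BF P) (hy : y ∈ BF P)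
    (hxy : bmul x y = z) : ε z = bmul (ε x) (ε y) :=
  hxy ▸ hend.2 x hx y hy

lemma exists_map_generators_eq (hend : IsEndo P ε) (h0 : 0 ∈ P)
    (hfix : ε (1, 1, 0) = (1, 1, 0)) :
    ∃ i, ε (0, 1, 0) = (i, 1, 0) ∧ ε (1, 0, 0) = (1, i, 0) := by
  obtain ⟨i, j, p, ha⟩ : ∃ i j p, ε (0, 1, 0) = (i, j, p) := ⟨_, _, _, rfl⟩
  obtain ⟨k, l, q, hb⟩ : ∃ k l q, ε (1, 0, 0) = (k, l, q) := ⟨_, _, _, rfl⟩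
  have hat := hend.map_eq_bmul h0 h0 (show bmul (0, 1, 0) (1, 1, 0) = (0, 1, 0) from rfl)
  have htb := hend.map_eq_bmul h0 h0 (show bmul (1, 1, 0) (1, 0, 0) = (1, 0, 0) from rfl)
  have hba := hend.map_eq_bmul h0 h0 (show bmul (1, 0, 0) (0, 1, 0) = (1, 1, 0) from rfl)
  simp only [ha, hb, hfix, bmul_mk, Prod.mk.injEq] at hat htb hba
  refine ⟨i, ?_, ?_⟩
  · rw [ha, Prod.mk.injEq, Prod.mk.injEq]; omega
  · rw [hb, Prod.mk.injEq, Prod.mk.injEq]; omega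

lemma map_generators (hend : IsEndo P ε) (h0 : 0 ∈ P) (hinj : Set.InjOn ε (BF P))
    (hfix : ε (1, 1, 0) = (1, 1, 0)) :
    ε (0, 1, 0) = (0, 1, 0) ∧ ε (1, 0, 0) = (1, 0, 0) := by
  obtain ⟨i, ha, hb⟩ := hend.exists_map_generators_eq h0 hfix
  have hone : ε (0, 0, 0) = (i, i, 0) := by
    rw [hend.map_eq_bmul h0 h0 (show bmul (0, 1, 0) (1, 0, 0) = (0, 0, 0) from rfl), ha, hb]
    simp
  have hle : i ≤ 1 := by
    have h := hend.map_eq_bmul h0 h0 (show bmul (0, 0, 0) (1, 1, 0) = (1, 1, 0) from rfl)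
    simp only [hone, hfix, bmul_mk, Prod.mk.injEq] at h
    omega
  have hne : i ≠ 1 := by
    rintro rfl
    simpa using hinj (x₁ := (0, 0, 0)) h0 h0 (hone.trans hfix.symm)
  obtain rfl : i = 0 := by omega
  exact ⟨ha, hb⟩

lemma map_zero_zero_zero (hend : IsEndo P ε) (h0 : 0 ∈ P) (ha : ε (0, 1, 0) = (0, 1, 0))
    (hb : ε (1, 0, 0) = (1, 0, 0)) : ε (0, 0, 0) = (0, 0, 0) := by
  rw [hend.map_eq_bmul h0 h0 (show bmul (0, 1, 0) (1, 0, 0) = (0, 0, 0) from rfl), ha, hb]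
  rfl

lemma map_powers (hend : IsEndo P ε) (h0 : 0 ∈ P) (ha : ε (0, 1, 0) = (0, 1, 0))
    (hb : ε (1, 0, 0) = (1, 0, 0)) (n : ℕ) :
    ε (n, 0, 0) = (n, 0, 0) ∧ ε (0, n, 0) = (0, n, 0) := by
  induction n with
  | zero => exact ⟨hend.map_zero_zero_zero h0 ha hb, hend.map_zero_zero_zero h0 ha hb⟩
  | succ n ih =>
    constructor
    · rw [hend.map_eq_bmul h0 h0 (show bmul (n, 0, 0) (1, 0, 0) = (n + 1, 0, 0) by simp), ih.1, hb]
      simp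
    · rw [hend.map_eq_bmul h0 h0 (show bmul (0, 1, 0) (0, n, 0) = (0, n + 1, 0) by simp), ih.2, ha]
      simp

lemma map_zero_zero (hend : IsEndo P ε) (hP : OmegaClosed P) (h0 : 0 ∈ P)
    (hinj : Set.InjOn ε (BF P)) (hfix : ε (1, 1, 0) = (1, 1, 0))
    (ha : ε (0, 1, 0) = (0, 1, 0)) (hb : ε (1, 0, 0) = (1, 0, 0)) :
    ∀ p ∈ P, ε (0, 0, p) = (0, 0, p) := by
  have hone := hend.map_zero_zero_zero h0 ha hb
  intro p
  induction p with
  | zero => exact fun _ ↦ hone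
  | succ p ih =>
    intro hp
    have hp' : p ∈ P := by simpa using hP.sub_mem h0 hp 1
    have hbpa : ε (1, 1, p) = (1, 1, p) := by
      rw [hend.map_eq_bmul h0 hp' (show bmul (1, 0, 0) (0, 1, p) = (1, 1, p) by simp), hb,
        hend.map_eq_bmul hp' h0 (show bmul (0, 0, p) (0, 1, 0) = (0, 1, p) by simp), ih hp', ha]
      simp
    obtain ⟨m, n, s, hε⟩ : ∃ m n s, ε (0, 0, p + 1) = (m, n, s) := ⟨_, _, _, rfl⟩
    have key := hend.map_eq_bmul hp h0 (show bmul (0, 0, p + 1) (1, 1, 0) = (1, 1, p) by simp)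
    rw [hbpa, hε, hfix, bmul_mk, Prod.mk.injEq, Prod.mk.injEq] at key
    -- `key` leaves `(m, n, s) ∈ {(0, 0, p + 1), (1, 1, p), (0, 0, 0)}`; injectivity rules out
    -- the last two, which are already the images of `(1, 1, p)` and `(0, 0, 0)`.
    have hn : n = 0 := by
      by_contra hn
      have h := hinj (x₁ := (0, 0, p + 1)) (x₂ := (1, 1, p)) hp hp'
        (by rw [hε, hbpa, Prod.mk.injEq, Prod.mk.injEq]; omega)
      simp at h
    have hs : s ≠ 0 := by
      rintro rfl
      have h := hinj (x₁ := (0, 0, p + 1)) (x₂ := (0, 0, 0)) hp h0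
        (by rw [hε, hone, Prod.mk.injEq, Prod.mk.injEq]; omega)
      simp at h
    rw [hε, Prod.mk.injEq, Prod.mk.injEq]
    omega

lemma eqOn_id_of_map_generators (hend : IsEndo P ε) (h0 : 0 ∈ P)
    (ha : ε (0, 1, 0) = (0, 1, 0)) (hb : ε (1, 0, 0) = (1, 0, 0))
    (hc : ∀ p ∈ P, ε (0, 0, p) = (0, 0, p)) : ∀ x ∈ BF P, ε x = x := by
  rintro ⟨i, j, p⟩ (hp : p ∈ P)
  have hp' : bmul (0, 0, p) (0, j, 0) ∈ BF P := by simpa using hp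
  rw [hend.map_eq_bmul h0 hp' (bmul_bmul_eq_mk i j p), (hend.map_powers h0 ha hb i).1,
    hend.2 (0, 0, p) hp (0, j, 0) h0, hc p hp, (hend.map_powers h0 ha hb j).2, bmul_bmul_eq_mk]

end IsEndo

theorem identity_of_fixes_one_one_zero_general (P : Set ℕ) (hP : OmegaClosed P) (h0 : 0 ∈ P)
    (ε : ℕ × ℕ × ℕ → ℕ × ℕ × ℕ)
    (hend : IsEndo P ε) (hinj : Set.InjOn ε (BF P))
    (hfix : ε (1, 1, 0) = (1, 1, 0)) :
    ∀ x ∈ BF P, ε x = x := by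
  obtain ⟨ha, hb⟩ := hend.map_generators h0 hinj hfix
  exact hend.eqOn_id_of_map_generators h0 ha hb (hend.map_zero_zero hP h0 hinj hfix ha hb)

/-- **Lemma 2.1.** If an injective endomorphism `ε` of `B_ω^𝓕` (`P` ω-closed, `0 ∈ P`,
`P` with at least two elements) satisfies `ε (1,1,0) = (1,1,0)`, then `ε` is the identity. -/
theorem identity_of_fixes_one_one_zero (P : Set ℕ) (hP : OmegaClosed P) (h0 : 0 ∈ P)
    (hP2 : P.Nontrivial) (ε : ℕ × ℕ × ℕ → ℕ × ℕ × ℕ)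
    (hend : IsEndo P ε) (hinj : Set.InjOn ε (BF P))
    (hfix : ε (1, 1, 0) = (1, 1, 0)) :
    ∀ x ∈ BF P, ε x = x :=
  identity_of_fixes_one_one_zero_general P hP h0 ε hend hinj hfix
end

section
/- Let ε be an injective endomorphism of the bicyclic semigroup B_ω. If ε(i,j) = (i,j) for some element (i,j) ∈ B_ω with (i,j) ≠ (0,0), then ε is the identity map. (Proposition 2.6) -/
/-- The multiplication of the bicyclic monoid `B_ω` on `ℕ × ℕ`:
`(i₁,j₁)·(i₂,j₂) = (i₁ + (i₂ ∸ j₁), j₂ + (j₁ ∸ i₂))`. -/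
def bimul (x y : ℕ × ℕ) : ℕ × ℕ :=
  (x.1 + (y.1 - x.2), y.2 + (x.2 - y.1))

/-- `ε` is an endomorphism of the bicyclic semigroup `B_ω`. -/
def IsBiEndo (ε : ℕ × ℕ → ℕ × ℕ) : Prop :=
  ∀ x y : ℕ × ℕ, ε (bimul x y) = bimul (ε x) (ε y)

/-!
An endomorphism `ε` sends the identity `(0,0)` to an idempotent `(c,c)`, which acts as an identity
on the whole image, so every `ε x` has both coordinates `≥ c`. Since `(0,1)·(1,0) = (0,0)`, this
forces `ε(0,1) = (c, c+d)` and `ε(1,0) = (c+d, c)`, and writing `(p,q) = (1,0)^p (0,1)^q` gives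
`ε(p,q) = (c + d p, c + d q)`. Injectivity rules out `d = 0`, and a fixed point other than `(0,0)`
then forces `c = 0` and `d = 1`.
-/

lemma bimul_zero_left (x : ℕ × ℕ) : bimul (0, 0) x = x := by
  simp [bimul]

lemma bimul_zero_right (x : ℕ × ℕ) : bimul x (0, 0) = x := by
  simp [bimul]

lemma bimul_one_zero_nat_zero (n : ℕ) : bimul (1, 0) (n, 0) = (n + 1, 0) := by
  simp [bimul, Nat.add_comm]

lemma bimul_zero_nat_zero_one (n : ℕ) : bimul (0, n) (0, 1) = (0, n + 1) := by
  simp [bimul, Nat.add_comm]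

lemma bimul_nat_zero_zero_nat (p q : ℕ) : bimul (p, 0) (0, q) = (p, q) := by
  simp [bimul]

lemma bimul_zero_one_one_zero : bimul (0, 1) (1, 0) = (0, 0) := by
  simp [bimul]

lemma fst_eq_snd_of_bimul_self (x : ℕ × ℕ) (h : bimul x x = x) : x.1 = x.2 := by
  have h₁ := congrArg Prod.fst h
  have h₂ := congrArg Prod.snd h
  simp only [bimul] at h₁ h₂
  omega

lemma bimul_idempotent_left_eq_iff (c : ℕ) (x : ℕ × ℕ) : bimul (c, c) x = x ↔ c ≤ x.1 := by
  simp only [bimul, Prod.ext_iff]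
  omega

lemma bimul_idempotent_right_eq_iff (c : ℕ) (x : ℕ × ℕ) : bimul x (c, c) = x ↔ c ≤ x.2 := by
  simp only [bimul, Prod.ext_iff]
  omega

namespace IsBiEndo

variable {ε : ℕ × ℕ → ℕ × ℕ} (hε : IsBiEndo ε)
include hε

lemma exists_map_zero_eq : ∃ c, ε (0, 0) = (c, c) := by
  refine ⟨(ε (0, 0)).1, Prod.ext rfl ?_⟩
  refine (fst_eq_snd_of_bimul_self _ ?_).symm
  rw [← hε, bimul_zero_left]

variable {c : ℕ} (hc : ε (0, 0) = (c, c))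
include hc

lemma le_map (x : ℕ × ℕ) : c ≤ (ε x).1 ∧ c ≤ (ε x).2 := by
  rw [← bimul_idempotent_left_eq_iff, ← bimul_idempotent_right_eq_iff, ← hc, ← hε, ← hε,
    bimul_zero_left, bimul_zero_right]
  exact ⟨rfl, rfl⟩

lemma exists_map_generators : ∃ d, ε (0, 1) = (c, c + d) ∧ ε (1, 0) = (c + d, c) := by
  have hab : bimul (ε (0, 1)) (ε (1, 0)) = (c, c) := by
    rw [← hε, bimul_zero_one_one_zero, hc]
  have h₁ := congrArg Prod.fst hab
  have h₂ := congrArg Prod.snd hab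
  obtain ⟨ha₁, ha₂⟩ := le_map hε hc (0, 1)
  obtain ⟨hb₁, hb₂⟩ := le_map hε hc (1, 0)
  simp only [bimul] at h₁ h₂
  refine ⟨(ε (0, 1)).2 - c, Prod.ext ?_ ?_, Prod.ext ?_ ?_⟩ <;> simp only <;> omega

variable {d : ℕ} (hgen : ε (0, 1) = (c, c + d) ∧ ε (1, 0) = (c + d, c))
include hgen

lemma map_nat_zero (n : ℕ) : ε (n, 0) = (c + d * n, c) := by
  induction n with
  | zero => simpa using hc
  | succ n ih =>
    rw [← bimul_one_zero_nat_zero, hε, ih, hgen.2]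
    simp only [bimul, Prod.ext_iff, Nat.mul_succ]
    omega

lemma map_zero_nat (n : ℕ) : ε (0, n) = (c, c + d * n) := by
  induction n with
  | zero => simpa using hc
  | succ n ih =>
    rw [← bimul_zero_nat_zero_one, hε, ih, hgen.1]
    simp only [bimul, Prod.ext_iff, Nat.mul_succ]
    omega

lemma map_eq (x : ℕ × ℕ) : ε x = (c + d * x.1, c + d * x.2) := by
  obtain ⟨p, q⟩ := x
  rw [← bimul_nat_zero_zero_nat p q, hε, map_nat_zero hε hc hgen, map_zero_nat hε hc hgen]
  simp [bimul]

end IsBiEndo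

lemma eq_zero_and_eq_one_of_add_mul_eq_self {c d n : ℕ} (hd : d ≠ 0) (hn : n ≠ 0)
    (h : c + d * n = n) : c = 0 ∧ d = 1 := by
  have hle : n ≤ d * n := Nat.le_mul_of_pos_left n (Nat.pos_of_ne_zero hd)
  refine ⟨by omega, ?_⟩
  exact (Nat.mul_eq_right hn).mp (by omega)

/-- **Proposition 2.6.** If an injective endomorphism `ε` of the bicyclic semigroup `B_ω`
fixes some element `(i,j) ≠ (0,0)`, then `ε` is the identity map. -/
theorem bicyclic_identity_of_fixed_point (ε : ℕ × ℕ → ℕ × ℕ)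
    (hend : IsBiEndo ε) (hinj : Function.Injective ε)
    (i j : ℕ) (hne : ((i, j) : ℕ × ℕ) ≠ (0, 0)) (hfix : ε (i, j) = (i, j)) :
    ∀ x : ℕ × ℕ, ε x = x := by
  obtain ⟨c, hc⟩ := hend.exists_map_zero_eq
  obtain ⟨d, hgen⟩ := hend.exists_map_generators hc
  have hform := hend.map_eq hc hgen
  have hd : d ≠ 0 := by
    rintro rfl
    simpa using hinj ((hform (0, 1)).trans (hform (0, 0)).symm)
  obtain ⟨hi, hj⟩ : c + d * i = i ∧ c + d * j = j := by
    simpa [Prod.ext_iff] using (hform (i, j)).symm.trans hfix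
  obtain ⟨rfl, rfl⟩ : c = 0 ∧ d = 1 := by
    by_cases hi0 : i = 0
    · exact eq_zero_and_eq_one_of_add_mul_eq_self hd (by rintro rfl; simp [hi0] at hne) hj
    · exact eq_zero_and_eq_one_of_add_mul_eq_self hd hi0 hi
  intro x
  simp [hform x]
end

section
/- Let P = {0,1} and let k ≥ 2 be a natural number. The map μ_k : B_ω^𝓕 → B_ω^𝓕 (𝓕 = {[0), [1)}) defined by μ_k(i,j,p) = (k·i, k·j, p) is an injective endomorphism of the semigroup B_ω^𝓕. (Example 2.9) -/
/-! Scaling the two ℕ-coordinates by `k > 0` commutes with truncated subtraction, so it respects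
the first two coordinates of `bmul`. In the third coordinate a shift `p ∸ d` of `p ∈ {0, 1}` only
sees whether `d = 0`, and `k * d = 0 ↔ d = 0`. -/

lemma Nat.sub_mul_eq_sub_of_le_one {p k : ℕ} (hp : p ≤ 1) (hk : 0 < k) (d : ℕ) :
    p - k * d = p - d := by
  rcases Nat.eq_zero_or_pos d with rfl | hd
  · simp
  · have : 1 ≤ k * d := Nat.mul_pos hk hd
    omega

def scaleIdx (k : ℕ) (x : ℕ × ℕ × ℕ) : ℕ × ℕ × ℕ := (k * x.1, k * x.2.1, x.2.2)

lemma scaleIdx_bmul {k : ℕ} (hk : 0 < k) {x y : ℕ × ℕ × ℕ} (hx : x.2.2 ≤ 1) (hy : y.2.2 ≤ 1) :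
    scaleIdx k (bmul x y) = bmul (scaleIdx k x) (scaleIdx k y) := by
  simp only [scaleIdx, bmul, Nat.mul_add, ← Nat.mul_sub, Nat.sub_mul_eq_sub_of_le_one hx hk,
    Nat.sub_mul_eq_sub_of_le_one hy hk]

lemma scaleIdx_injective {k : ℕ} (hk : 0 < k) : Function.Injective (scaleIdx k) := by
  rintro ⟨i₁, j₁, p₁⟩ ⟨i₂, j₂, p₂⟩ h
  simp only [scaleIdx, Prod.mk.injEq, Nat.mul_left_cancel_iff hk] at h
  rw [h.1, h.2.1, h.2.2]

lemma le_one_of_mem_BF {x : ℕ × ℕ × ℕ} (hx : x ∈ BF ({0, 1} : Set ℕ)) : x.2.2 ≤ 1 := by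
  obtain h | h : x.2.2 = 0 ∨ x.2.2 = 1 := hx <;> omega

/-- **Example 2.9.** For `P = {0,1}` and `k ≥ 2`, the map
`μ_k (i,j,p) = (k·i, k·j, p)` is an injective endomorphism of `B_ω^𝓕`. -/
theorem mu_k_injective_endo (k : ℕ) (hk : 2 ≤ k) :
    IsEndo ({0, 1} : Set ℕ) (fun x : ℕ × ℕ × ℕ => (k * x.1, k * x.2.1, x.2.2)) ∧
      Set.InjOn (fun x : ℕ × ℕ × ℕ => (k * x.1, k * x.2.1, x.2.2))
        (BF ({0, 1} : Set ℕ)) := by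
  have hk₀ : 0 < k := by omega
  refine ⟨⟨fun x hx => hx, fun x hx y hy => ?_⟩, (scaleIdx_injective hk₀).injOn⟩
  exact scaleIdx_bmul hk₀ (le_one_of_mem_BF hx) (le_one_of_mem_BF hy)
end

section
/- Let P ⊆ ℕ be ω-closed with 0 ∈ P and with at least two elements. The map μ₀ : B_ω^𝓕 → B_ω^𝓕 (𝓕 = {[p) : p ∈ P}) defined by μ₀(i,j,p) = (i,j,0) is an endomorphism of the semigroup B_ω^𝓕 which is not injective and not the identity, but which fixes the non-idempotent element (0,1,0) and has at least three fixed points. (Hence injectivity cannot be dropped from the hypotheses of Theorem 2.5.) (Example 2.8) -/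
-- The first two coordinates of a product ignore the levels, and `0 ∸ n = 0` keeps level `0`.
theorem bmul_level_zero (x y : ℕ × ℕ × ℕ) :
    bmul (x.1, x.2.1, 0) (y.1, y.2.1, 0) = ((bmul x y).1, (bmul x y).2.1, 0) := by
  simp [bmul]

theorem isEndo_level_zero {P : Set ℕ} (h0 : 0 ∈ P) :
    IsEndo P (fun x : ℕ × ℕ × ℕ => (x.1, x.2.1, 0)) :=
  ⟨fun _ _ => h0, fun x _ y _ => (bmul_level_zero x y).symm⟩

theorem level_zero_eq_self_iff (x : ℕ × ℕ × ℕ) : (x.1, x.2.1, 0) = x ↔ x.2.2 = 0 := by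
  simp [Prod.ext_iff, eq_comm]

theorem mu_zero_counterexample_general (P : Set ℕ) (h0 : 0 ∈ P)
    (hP2 : P.Nontrivial) :
    IsEndo P (fun x : ℕ × ℕ × ℕ => (x.1, x.2.1, 0)) ∧
    ¬ Set.InjOn (fun x : ℕ × ℕ × ℕ => (x.1, x.2.1, 0)) (BF P) ∧
    ¬ (∀ x ∈ BF P, (fun x : ℕ × ℕ × ℕ => (x.1, x.2.1, 0)) x = x) ∧
    (fun x : ℕ × ℕ × ℕ => (x.1, x.2.1, 0)) (0, 1, 0) = ((0, 1, 0) : ℕ × ℕ × ℕ) ∧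
    bmul (0, 1, 0) (0, 1, 0) ≠ ((0, 1, 0) : ℕ × ℕ × ℕ) ∧
    (∃ x ∈ BF P, ∃ y ∈ BF P, ∃ z ∈ BF P,
      x ≠ y ∧ x ≠ z ∧ y ≠ z ∧
      (fun x : ℕ × ℕ × ℕ => (x.1, x.2.1, 0)) x = x ∧
      (fun x : ℕ × ℕ × ℕ => (x.1, x.2.1, 0)) y = y ∧
      (fun x : ℕ × ℕ × ℕ => (x.1, x.2.1, 0)) z = z) := by
  obtain ⟨q, hqP, hq0⟩ := hP2.exists_ne 0
  have hq_moved : ((0, 0, q) : ℕ × ℕ × ℕ) ≠ (0, 0, 0) := by simpa using hq0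
  refine ⟨isEndo_level_zero h0, ?_, ?_, rfl, ?_, ?_⟩
  · exact fun hinj => hq_moved (hinj (x₁ := (0, 0, q)) (x₂ := (0, 0, 0)) hqP h0 rfl)
  · exact fun hfix => hq0 ((level_zero_eq_self_iff _).1 (hfix (0, 0, q) hqP))
  · decide
  · exact ⟨(0, 0, 0), h0, (0, 1, 0), h0, (1, 0, 0), h0,
      by decide, by decide, by decide, rfl, rfl, rfl⟩

/-- **Example 2.8.** For `P` ω-closed with `0 ∈ P` and at least two elements, the map
`μ₀ (i,j,p) = (i,j,0)` is an endomorphism of `B_ω^𝓕` which is neither injective nor the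
identity, yet it fixes the non-idempotent element `(0,1,0)` and has at least three
fixed points. -/
theorem mu_zero_counterexample (P : Set ℕ) (hP : OmegaClosed P) (h0 : 0 ∈ P)
    (hP2 : P.Nontrivial) :
    IsEndo P (fun x : ℕ × ℕ × ℕ => (x.1, x.2.1, 0)) ∧
    ¬ Set.InjOn (fun x : ℕ × ℕ × ℕ => (x.1, x.2.1, 0)) (BF P) ∧
    ¬ (∀ x ∈ BF P, (fun x : ℕ × ℕ × ℕ => (x.1, x.2.1, 0)) x = x) ∧
    (fun x : ℕ × ℕ × ℕ => (x.1, x.2.1, 0)) (0, 1, 0) = ((0, 1, 0) : ℕ × ℕ × ℕ) ∧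
    bmul (0, 1, 0) (0, 1, 0) ≠ ((0, 1, 0) : ℕ × ℕ × ℕ) ∧
    (∃ x ∈ BF P, ∃ y ∈ BF P, ∃ z ∈ BF P,
      x ≠ y ∧ x ≠ z ∧ y ≠ z ∧
      (fun x : ℕ × ℕ × ℕ => (x.1, x.2.1, 0)) x = x ∧
      (fun x : ℕ × ℕ × ℕ => (x.1, x.2.1, 0)) y = y ∧
      (fun x : ℕ × ℕ × ℕ => (x.1, x.2.1, 0)) z = z) :=
  mu_zero_counterexample_general P h0 hP2
end

section
/- Let P ⊆ ℕ be ω-closed with 0 ∈ P, and let ε be an injective endomorphism of the semigroup B_ω^𝓕 (𝓕 = {[p) : p ∈ P}). If ε(0,0,0) = (0,0,0) and ε(1,1,0) = (1,1,0), then ε(m,n,0) = (m,n,0) for all m,n ∈ ℕ. (Base step in the proof of Lemma 2.1; it uses that every element (m,n,0) equals (1,0,0)^m · (0,1,0)^n in B_ω^𝓕.) -/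
/-!
Since `(m, n, 0) = (1,0,0)^m · (0,1,0)^n`, it suffices that `ε` fixes the two generators.
Their images `a = ε(1,0,0)` and `b = ε(0,1,0)` satisfy `b · a = ε(0,0,0) = (0,0,0)` and
`a · b = ε(1,1,0) = (1,1,0)`, and a direct computation with the multiplication shows that
these two equations force `a = (1,0,0)` and `b = (0,1,0)`.
-/

theorem bmul_succ_fst (m : ℕ) : bmul (m, 0, 0) (1, 0, 0) = (m + 1, 0, 0) := by
  simp [bmul]

theorem bmul_succ_snd (m n : ℕ) : bmul (m, n, 0) (0, 1, 0) = (m, n + 1, 0) := by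
  simp only [bmul, Prod.ext_iff]
  omega

theorem eq_generators_of_bmul {a b : ℕ × ℕ × ℕ} (hba : bmul b a = (0, 0, 0))
    (hab : bmul a b = (1, 1, 0)) : a = (1, 0, 0) ∧ b = (0, 1, 0) := by
  simp only [bmul, Prod.ext_iff] at hba hab ⊢
  omega

section Multiplicative

variable {P : Set ℕ} {ε : ℕ × ℕ × ℕ → ℕ × ℕ × ℕ}

theorem map_generators_eq_self
    (hmul : ∀ x ∈ BF P, ∀ y ∈ BF P, ε (bmul x y) = bmul (ε x) (ε y)) (h0 : 0 ∈ P)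
    (hfix0 : ε (0, 0, 0) = (0, 0, 0))
    (hfix1 : ε (1, 1, 0) = (1, 1, 0)) : ε (1, 0, 0) = (1, 0, 0) ∧ ε (0, 1, 0) = (0, 1, 0) := by
  apply eq_generators_of_bmul
  · rw [← hmul _ h0 _ h0, ← hfix0]
    rfl
  · rw [← hmul _ h0 _ h0, ← hfix1]
    rfl

theorem map_level_zero_eq_self_of_generators
    (hmul : ∀ x ∈ BF P, ∀ y ∈ BF P, ε (bmul x y) = bmul (ε x) (ε y)) (h0 : 0 ∈ P)
    (ha : ε (1, 0, 0) = (1, 0, 0))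
    (hb : ε (0, 1, 0) = (0, 1, 0)) (m n : ℕ) : ε (m, n, 0) = (m, n, 0) := by
  induction n with
  | zero =>
    induction m with
    | zero => rw [show ((0, 0, 0) : ℕ × ℕ × ℕ) = bmul (0, 1, 0) (1, 0, 0) from rfl,
        hmul _ h0 _ h0, ha, hb]
    | succ k ih => rw [← bmul_succ_fst, hmul _ h0 _ h0, ih, ha]
  | succ k ih => rw [← bmul_succ_snd, hmul _ h0 _ h0, ih, hb]

end Multiplicative

theorem endo_fixes_level_zero_general (P : Set ℕ) (h0 : 0 ∈ P)
    (ε : ℕ × ℕ × ℕ → ℕ × ℕ × ℕ) (hend : IsEndo P ε)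
    (hfix0 : ε (0, 0, 0) = (0, 0, 0)) (hfix1 : ε (1, 1, 0) = (1, 1, 0)) :
    ∀ m n : ℕ, ε (m, n, 0) = (m, n, 0) := by
  obtain ⟨ha, hb⟩ := map_generators_eq_self hend.2 h0 hfix0 hfix1
  exact map_level_zero_eq_self_of_generators hend.2 h0 ha hb

/-- Base step in the proof of **Lemma 2.1**: if an injective endomorphism `ε` of
`B_ω^𝓕` (`P` ω-closed, `0 ∈ P`) fixes `(0,0,0)` and `(1,1,0)`, then it fixes `(m,n,0)`
for all `m, n ∈ ℕ`. -/
theorem endo_fixes_level_zero (P : Set ℕ) (hP : OmegaClosed P) (h0 : 0 ∈ P)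
    (ε : ℕ × ℕ × ℕ → ℕ × ℕ × ℕ) (hend : IsEndo P ε) (hinj : Set.InjOn ε (BF P))
    (hfix0 : ε (0, 0, 0) = (0, 0, 0)) (hfix1 : ε (1, 1, 0) = (1, 1, 0)) :
    ∀ m n : ℕ, ε (m, n, 0) = (m, n, 0) :=
  endo_fixes_level_zero_general P h0 ε hend hfix0 hfix1
end

section
/- Let ε be an injective endomorphism of the bicyclic semigroup B_ω. If ε(i,i) = (i,i) for some idempotent (i,i) ∈ B_ω with i ≥ 1, then ε(k,k) = (k,k) for all k = 0, 1, …, i. (Intermediate claim in the proof of Proposition 2.6; it follows since the set of idempotents above (i,i) in the natural partial order e ≼ f ⇔ e·f = f·e = e is the chain {(k,k) : k ≤ i}, which an injective homomorphism must fix pointwise once its least element is fixed.) -/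
lemma bimul_self_eq_self_iff (x : ℕ × ℕ) : bimul x x = x ↔ x.1 = x.2 := by
  obtain ⟨a, b⟩ := x
  simp only [bimul, Prod.mk.injEq]
  omega

lemma bimul_diag_of_le {k l : ℕ} (hkl : k ≤ l) : bimul (k, k) (l, l) = (l, l) := by
  simp only [bimul, Prod.mk.injEq]
  omega

lemma StrictMono.apply_eq_self_of_le {f : ℕ → ℕ} (hf : StrictMono f) {i k : ℕ}
    (hfi : f i = i) (hki : k ≤ i) : f k = k := by
  have hle := hf.add_le_nat (i - k) k
  rw [Nat.sub_add_cancel hki, hfi] at hle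
  have hge : k ≤ f k := hf.le_apply
  omega

namespace IsBiEndo

variable {ε : ℕ × ℕ → ℕ × ℕ} (hε : IsBiEndo ε)
include hε

lemma map_diag (k : ℕ) : ε (k, k) = ((ε (k, k)).1, (ε (k, k)).1) := by
  have hidem : bimul (ε (k, k)) (ε (k, k)) = ε (k, k) := by
    rw [← hε, (bimul_self_eq_self_iff (k, k)).2 rfl]
  rw [bimul_self_eq_self_iff] at hidem
  exact Prod.ext rfl hidem.symm

lemma monotone_diag : Monotone fun k ↦ (ε (k, k)).1 := by
  intro k l hkl
  show (ε (k, k)).1 ≤ (ε (l, l)).1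
  have hmul := hε (k, k) (l, l)
  rw [bimul_diag_of_le hkl, hε.map_diag k, hε.map_diag l] at hmul
  have hsnd := congrArg Prod.snd hmul
  simp only [bimul] at hsnd
  omega

lemma strictMono_diag (hinj : Function.Injective ε) : StrictMono fun k ↦ (ε (k, k)).1 := by
  refine hε.monotone_diag.strictMono_of_injective fun k l hkl ↦ ?_
  have hεkl : ε (k, k) = ε (l, l) := by
    rw [hε.map_diag k, hε.map_diag l]
    simp only at hkl
    rw [hkl]
  exact congrArg Prod.fst (hinj hεkl)

end IsBiEndo

theorem bicyclic_fixes_chain_below_general (ε : ℕ × ℕ → ℕ × ℕ)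
    (hend : IsBiEndo ε) (hinj : Function.Injective ε)
    (i : ℕ) (hfix : ε (i, i) = (i, i)) :
    ∀ k : ℕ, k ≤ i → ε (k, k) = (k, k) := by
  intro k hki
  have hk : (ε (k, k)).1 = k :=
    (hend.strictMono_diag hinj).apply_eq_self_of_le (i := i) (by rw [hfix]) hki
  rw [hend.map_diag k, hk]

/-- Intermediate claim in the proof of **Proposition 2.6**: if an injective endomorphism
`ε` of the bicyclic semigroup `B_ω` fixes an idempotent `(i,i)` with `i ≥ 1`, then it
fixes every idempotent `(k,k)` with `k ≤ i`. -/
theorem bicyclic_fixes_chain_below (ε : ℕ × ℕ → ℕ × ℕ)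
    (hend : IsBiEndo ε) (hinj : Function.Injective ε)
    (i : ℕ) (hi : 1 ≤ i) (hfix : ε (i, i) = (i, i)) :
    ∀ k : ℕ, k ≤ i → ε (k, k) = (k, k) :=
  bicyclic_fixes_chain_below_general ε hend hinj i hfix
end
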